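/- Suppose the KL assumption holds with the Łojasiewicz desingularizing function ψ(s) = c·s^{1/2} for some c > 0, and L(y(0)) > 0. Then for all t ≥ 0: L(y(t)) ≤ L(y(0))·exp(−(σ_F²·σ₀²/c²)·t), and, with θ∞ := lim_{t→∞} θ(t), ‖θ(t) − θ∞‖ ≤ (2c/(σ₀·σ_F))·√(L(y(0)))·exp(−(σ_F²·σ₀²/(2c²))·t). -/

import Mathlib

/-!
Along the flow, `h t = f (θ t)` satisfies `h' = -‖∇f (θ t)‖²`. On the ball `B̄(θ₀, R)` the
function `f` satisfies the Łojasiewicz inequality `μ √f ≤ ‖∇f‖` with `μ = σ_F σ₀ / c`: the KL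
assumption gives `2 √L ≤ c ‖∇L‖`, restricted injectivity passes this through `J_F*`, and the
Lipschitz bound keeps `σ_min (J_g) ≥ σ₀ / 2` on the ball. Then `(√h)' ≤ -(μ / 2) ‖θ'‖`, so the
length of the path after time `t` is at most `(2 / μ) √(h t)`. With `t = 0` this keeps the flow
inside `B̄(θ₀, R')`, so the inequality holds for all times; hence `h` decays like `e^{-μ² t}`,
and the length bound turns this into convergence of `θ` at the rate `e^{-μ² t / 2}`.
-/

open Filter MeasureTheory ProbabilityTheory
open scoped Topology NNReal

noncomputable def sigmaMin {E F : Type*} [NormedAddCommGroup E] [InnerProductSpace ℝ E]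
    [CompleteSpace E] [NormedAddCommGroup F] [InnerProductSpace ℝ F] [CompleteSpace F]
    (A : E →L[ℝ] F) : ℝ :=
  ⨅ w : {w : F // ‖w‖ = 1}, ‖ContinuousLinearMap.adjoint A w.1‖

open ContinuousLinearMap (adjoint)
open Set Metric

section Adjoint

variable {E F : Type*} [NormedAddCommGroup E] [InnerProductSpace ℝ E] [CompleteSpace E]
  [NormedAddCommGroup F] [InnerProductSpace ℝ F] [CompleteSpace F]

lemma sigmaMin_mul_norm_le (A : E →L[ℝ] F) (w : F) : sigmaMin A * ‖w‖ ≤ ‖adjoint A w‖ := by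
  rcases eq_or_ne w 0 with rfl | hw
  · simp
  have hbdd : BddBelow (range fun u : {u : F // ‖u‖ = 1} => ‖adjoint A u.1‖) :=
    ⟨0, by rintro _ ⟨u, rfl⟩; exact norm_nonneg _⟩
  have hle : sigmaMin A ≤ ‖adjoint A (‖w‖⁻¹ • w)‖ :=
    ciInf_le hbdd ⟨‖w‖⁻¹ • w, norm_smul_inv_norm hw⟩
  rw [map_smul, norm_smul, norm_inv, norm_norm, ← div_eq_inv_mul,
    le_div_iff₀ (norm_pos_iff.2 hw)] at hle
  exact hle

lemma sigmaMin_sub_mul_norm_le {A B : E →L[ℝ] F} {δ : ℝ} (hAB : ‖A - B‖ ≤ δ) (w : F) :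
    (sigmaMin A - δ) * ‖w‖ ≤ ‖adjoint B w‖ := by
  have hdiff : ‖adjoint A w - adjoint B w‖ ≤ δ * ‖w‖ :=
    calc ‖adjoint A w - adjoint B w‖ = ‖adjoint (A - B) w‖ := by rw [map_sub]; rfl
      _ ≤ ‖adjoint (A - B)‖ * ‖w‖ := (adjoint (A - B)).le_opNorm w
      _ ≤ δ * ‖w‖ := by rw [LinearIsometryEquiv.norm_map]; gcongr
  have := norm_sub_norm_le (adjoint A w) (adjoint B w)
  rw [sub_mul]
  linarith [sigmaMin_mul_norm_le A w]

theorem gradient_fun_comp {f : F → ℝ} {g : E → F} {x : E} (hf : DifferentiableAt ℝ f (g x))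
    (hg : DifferentiableAt ℝ g x) :
    gradient (fun y => f (g y)) x = adjoint (fderiv ℝ g x) (gradient f (g x)) := by
  refine ext_inner_right ℝ fun u => ?_
  rw [ContinuousLinearMap.adjoint_inner_left, gradient, gradient,
    InnerProductSpace.toDual_symm_apply, InnerProductSpace.toDual_symm_apply,
    fderiv_fun_comp x hf hg, ContinuousLinearMap.comp_apply]

end Adjoint

lemma forall_le_of_forall_lt_imp_le {u : ℝ → ℝ} {a r R : ℝ} (hu : ContinuousOn u (Ici a))
    (hr : r < R) (h : ∀ T ≥ a, (∀ s ∈ Ico a T, u s < R) → u T ≤ r) : ∀ t ≥ a, u t ≤ r := by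
  suffices hlt : ∀ t ≥ a, u t < R from
    fun t ht => h t ht fun s hs => hlt s hs.1
  by_contra! hbad
  set S := {t ∈ Ici a | R ≤ u t}
  have hS : IsClosed S := hu.preimage_isClosed_of_isClosed isClosed_Ici isClosed_Ici
  have hbdd : BddBelow S := ⟨a, fun s hs => hs.1⟩
  obtain ⟨hT, hRT⟩ := hS.csInf_mem hbad hbdd
  have hbefore : ∀ s ∈ Ico a (sInf S), u s < R := fun s hs =>
    lt_of_not_ge fun hRs => hs.2.not_ge (csInf_le hbdd ⟨hs.1, hRs⟩)
  linarith [h _ hT hbefore]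

lemma exists_tendsto_of_norm_sub_le {E : Type*} [NormedAddCommGroup E] [CompleteSpace E]
    {θ : ℝ → E} {φ : ℝ → ℝ} {a : ℝ} (hφ : Tendsto φ atTop (𝓝 0))
    (h : ∀ s t, a ≤ s → s ≤ t → ‖θ t - θ s‖ ≤ φ s) :
    ∃ l, Tendsto θ atTop (𝓝 l) ∧ ∀ s ≥ a, ‖θ s - l‖ ≤ φ s := by
  have hcauchy : CauchySeq θ := by
    refine Metric.cauchySeq_iff'.2 fun ε hε => ?_
    obtain ⟨N, hNa, hNε⟩ :=
      ((eventually_ge_atTop a).and (hφ.eventually (gt_mem_nhds hε))).exists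
    exact ⟨N, fun t ht => (dist_eq_norm _ _).trans_lt ((h N t hNa ht).trans_lt hNε)⟩
  obtain ⟨l, hl⟩ := cauchySeq_tendsto_of_complete hcauchy
  refine ⟨l, hl, fun s hs => le_of_tendsto ((tendsto_const_nhds.sub hl).norm) ?_⟩
  filter_upwards [eventually_ge_atTop s] with t ht
  rw [norm_sub_rev]
  exact h s t hs ht

section Composite

variable {E₁ E₂ E₃ : Type*} [NormedAddCommGroup E₁] [InnerProductSpace ℝ E₁] [CompleteSpace E₁]
  [NormedAddCommGroup E₂] [InnerProductSpace ℝ E₂] [CompleteSpace E₂]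
  [NormedAddCommGroup E₃] [InnerProductSpace ℝ E₃] [CompleteSpace E₃]

lemma mul_sqrt_le_norm_gradient_comp {L : E₃ → ℝ} {F : E₂ → E₃} {g : E₁ → E₂} {q : E₁}
    {c σ σF : ℝ} (hL : DifferentiableAt ℝ L (F (g q))) (hF : DifferentiableAt ℝ F (g q))
    (hg : DifferentiableAt ℝ g q) (hc : 0 < c) (hσ : 0 ≤ σ) (hσF : 0 ≤ σF) (hL₀ : 0 ≤ L (F (g q)))
    (hKL : 0 < L (F (g q)) → 1 ≤ c / (2 * √(L (F (g q)))) * ‖gradient L (F (g q))‖)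
    (hJF : σF * ‖gradient L (F (g q))‖ ≤ ‖adjoint (fderiv ℝ F (g q)) (gradient L (F (g q)))‖)
    (hJg : ∀ u, σ / 2 * ‖u‖ ≤ ‖adjoint (fderiv ℝ g q) u‖) :
    σF * σ / c * √(L (F (g q))) ≤ ‖gradient (fun x => L (F (g x))) q‖ := by
  set v := F (g q)
  rcases hL₀.eq_or_lt with hzero | hpos
  · rw [← hzero, Real.sqrt_zero, mul_zero]
    exact norm_nonneg _
  have hsqrt : 0 < 2 * √(L v) := by positivity
  have hKL' : 2 * √(L v) ≤ c * ‖gradient L v‖ := by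
    have := hKL hpos
    rwa [div_mul_eq_mul_div, le_div_iff₀ hsqrt, one_mul] at this
  rw [gradient_fun_comp (g := g) (f := fun y => L (F y)) (hL.comp _ hF) hg,
    gradient_fun_comp hL hF]
  calc σF * σ / c * √(L v) = σ / 2 * σF * (2 * √(L v)) / c := by ring
    _ ≤ σ / 2 * σF * (c * ‖gradient L v‖) / c := by gcongr
    _ = σ / 2 * (σF * ‖gradient L v‖) := by field_simp
    _ ≤ σ / 2 * ‖adjoint (fderiv ℝ F (g q)) (gradient L v)‖ := by gcongr
    _ ≤ _ := hJg _

end Composite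

section GradientFlow

variable {E : Type*} [NormedAddCommGroup E] [InnerProductSpace ℝ E] [CompleteSpace E]
  {f : E → ℝ} {θ : ℝ → E} {μ : ℝ}

def IsGradientFlow (f : E → ℝ) (θ : ℝ → E) : Prop :=
  ∀ t ≥ (0 : ℝ), HasDerivAt θ (-gradient f (θ t)) t

namespace IsGradientFlow

variable (hθ : IsGradientFlow f θ) (hf : Differentiable ℝ f)
include hθ

lemma continuousOn : ContinuousOn θ (Ici 0) :=
  fun t ht => (hθ t ht).continuousAt.continuousWithinAt

include hf

lemma hasDerivAt_comp {t : ℝ} (ht : 0 ≤ t) :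
    HasDerivAt (fun s => f (θ s)) (-‖gradient f (θ t)‖ ^ 2) t := by
  have := (hf (θ t)).hasGradientAt.hasFDerivAt.comp_hasDerivAt t (hθ t ht)
  rwa [InnerProductSpace.toDual_apply_apply, inner_neg_right, real_inner_self_eq_norm_sq] at this

lemma antitoneOn_comp : AntitoneOn (fun t => f (θ t)) (Ici 0) := by
  refine antitoneOn_of_hasDerivWithinAt_nonpos (f' := fun t => -‖gradient f (θ t)‖ ^ 2)
    (convex_Ici 0)
    (hf.continuous.comp_continuousOn hθ.continuousOn) (fun t ht => ?_)
    (fun t _ => neg_nonpos.2 (sq_nonneg _))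
  rw [interior_Ici] at ht
  exact (hθ.hasDerivAt_comp hf (le_of_lt ht)).hasDerivWithinAt

lemma eq_of_comp_eq_zero (hf₀ : ∀ x, 0 ≤ f x) {t s : ℝ} (ht : 0 ≤ t) (hts : t ≤ s)
    (hzero : f (θ t) = 0) : θ s = θ t := by
  have hstop : ∀ x ∈ Ico t s, HasDerivWithinAt θ 0 (Ici x) x := by
    intro x hx
    have hmin : IsLocalMin f (θ x) := Eventually.of_forall fun y => by
      rw [le_antisymm (hzero ▸ hθ.antitoneOn_comp hf ht (ht.trans hx.1) hx.1) (hf₀ _)]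
      exact hf₀ y
    have hgrad : gradient f (θ x) = 0 := by simp [gradient, hmin.fderiv_eq_zero]
    simpa [hgrad] using (hθ x (ht.trans hx.1)).hasDerivWithinAt
  exact constant_of_has_deriv_right_zero (hθ.continuousOn.mono fun x hx => ht.trans hx.1) hstop
    s (right_mem_Icc.2 hts)

lemma norm_sub_le_of_pos (hμ : 0 < μ) {a b : ℝ} (ha : 0 ≤ a) (hab : a ≤ b)
    (hpos : ∀ s ∈ Ico a b, 0 < f (θ s))
    (hloj : ∀ s ∈ Ico a b, μ * √(f (θ s)) ≤ ‖gradient f (θ s)‖) :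
    ‖θ b - θ a‖ ≤ 2 / μ * (√(f (θ a)) - √(f (θ b))) := by
  have hIcc : Icc a b ⊆ Ici 0 := fun x hx => ha.trans hx.1
  have hB : ∀ x ∈ Ico a b, HasDerivWithinAt (fun s => 2 / μ * (√(f (θ a)) - √(f (θ s))))
      (‖gradient f (θ x)‖ ^ 2 / (μ * √(f (θ x)))) (Ici x) x := by
    intro x hx
    have hsqrt := (hθ.hasDerivAt_comp hf (ha.trans hx.1)).sqrt (hpos x hx).ne'
    have : 0 < √(f (θ x)) := Real.sqrt_pos.2 (hpos x hx)
    refine (((hsqrt.const_sub _).const_mul (2 / μ)).congr_deriv ?_).hasDerivWithinAt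
    field_simp
  refine image_norm_le_of_norm_deriv_right_le_deriv_boundary' (f' := fun x => -gradient f (θ x))
    ((hθ.continuousOn.mono hIcc).sub continuousOn_const)
    (fun x hx => ((hθ x (ha.trans hx.1)).sub_const _).hasDerivWithinAt) (by simp)
    (continuousOn_const.mul (continuousOn_const.sub
      ((hf.continuous.comp_continuousOn (hθ.continuousOn.mono hIcc)).sqrt))) hB
    (fun x hx => ?_) (right_mem_Icc.2 hab)
  have hden : 0 < μ * √(f (θ x)) := mul_pos hμ (Real.sqrt_pos.2 (hpos x hx))
  rw [norm_neg, le_div_iff₀ hden, sq]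
  exact mul_le_mul_of_nonneg_left (hloj x hx) (norm_nonneg _)

lemma norm_sub_le (hf₀ : ∀ x, 0 ≤ f x) (hμ : 0 < μ) {a b : ℝ} (ha : 0 ≤ a) (hab : a ≤ b)
    (hloj : ∀ s ∈ Ico a b, μ * √(f (θ s)) ≤ ‖gradient f (θ s)‖) :
    ‖θ b - θ a‖ ≤ 2 / μ * (√(f (θ a)) - √(f (θ b))) := by
  by_cases hzero : ∃ s ∈ Icc a b, f (θ s) = 0
  · set Z := {s ∈ Icc a b | f (θ s) = 0}
    have hZ : IsClosed Z :=
      ((hf.continuous.comp_continuousOn hθ.continuousOn).mono fun x hx => ha.trans hx.1)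
        |>.preimage_isClosed_of_isClosed isClosed_Icc isClosed_singleton
    have hbdd : BddBelow Z := ⟨a, fun s hs => hs.1.1⟩
    obtain ⟨⟨haT, hTb⟩, hT⟩ := hZ.csInf_mem hzero hbdd
    have hpos : ∀ s ∈ Ico a (sInf Z), 0 < f (θ s) := fun s hs =>
      (hf₀ _).lt_of_ne fun h => hs.2.not_ge (csInf_le hbdd ⟨⟨hs.1, hs.2.le.trans hTb⟩, h.symm⟩)
    have hstop : θ b = θ (sInf Z) := hθ.eq_of_comp_eq_zero hf hf₀ (ha.trans haT) hTb hT
    rw [hstop]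
    simpa [hT] using hθ.norm_sub_le_of_pos hf hμ ha haT hpos
      fun s hs => hloj s ⟨hs.1, hs.2.trans_le hTb⟩
  · exact hθ.norm_sub_le_of_pos hf hμ ha hab
      (fun s hs => (hf₀ _).lt_of_ne fun h => hzero ⟨s, Ico_subset_Icc_self hs, h.symm⟩) hloj

lemma comp_le_mul_exp (hf₀ : ∀ x, 0 ≤ f x) (hμ : 0 ≤ μ) {t : ℝ} (ht : 0 ≤ t)
    (hloj : ∀ s ∈ Ico 0 t, μ * √(f (θ s)) ≤ ‖gradient f (θ s)‖) :
    f (θ t) ≤ f (θ 0) * Real.exp (-μ ^ 2 * t) := by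
  have hderiv : ∀ s ≥ 0, HasDerivAt (fun r => f (θ r) * Real.exp (μ ^ 2 * r))
      ((μ ^ 2 * f (θ s) - ‖gradient f (θ s)‖ ^ 2) * Real.exp (μ ^ 2 * s)) s := fun s hs =>
    ((hθ.hasDerivAt_comp hf hs).mul ((hasDerivAt_id' s).const_mul (μ ^ 2)).exp).congr_deriv
      (by ring)
  have hanti : AntitoneOn (fun r => f (θ r) * Real.exp (μ ^ 2 * r)) (Icc 0 t) := by
    refine antitoneOn_of_hasDerivWithinAt_nonpos (convex_Icc 0 t)
      (fun s hs => (hderiv s hs.1).continuousAt.continuousWithinAt)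
      (fun s hs => (hderiv s (interior_subset hs).1).hasDerivWithinAt) fun s hs => ?_
    rw [interior_Icc] at hs
    have hsq : μ ^ 2 * f (θ s) ≤ ‖gradient f (θ s)‖ ^ 2 := by
      have := pow_le_pow_left₀ (by positivity) (hloj s ⟨hs.1.le, hs.2⟩) 2
      rwa [mul_pow, Real.sq_sqrt (hf₀ _)] at this
    exact mul_nonpos_of_nonpos_of_nonneg (by linarith) (Real.exp_pos _).le
  have : f (θ t) * Real.exp (μ ^ 2 * t) ≤ f (θ 0) * Real.exp (μ ^ 2 * 0) :=
    hanti ⟨le_rfl, ht⟩ ⟨ht, le_rfl⟩ ht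
  rw [mul_zero, Real.exp_zero, mul_one] at this
  rwa [neg_mul, Real.exp_neg, ← div_eq_mul_inv, le_div_iff₀ (Real.exp_pos _)]

lemma dist_le_of_lojasiewicz (hf₀ : ∀ x, 0 ≤ f x) (hμ : 0 < μ) {R : ℝ}
    (hR : 2 / μ * √(f (θ 0)) < R)
    (hloj : ∀ q ∈ closedBall (θ 0) R, f q ≤ f (θ 0) → μ * √(f q) ≤ ‖gradient f q‖) :
    ∀ t ≥ 0, dist (θ t) (θ 0) ≤ 2 / μ * √(f (θ 0)) := by
  refine forall_le_of_forall_lt_imp_le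
    ((continuous_id.dist continuous_const).comp_continuousOn hθ.continuousOn) hR
    fun T hT hball => ?_
  have hlen := hθ.norm_sub_le hf hf₀ hμ le_rfl hT fun s hs =>
    hloj _ (mem_closedBall.2 (hball s hs).le) (hθ.antitoneOn_comp hf self_mem_Ici hs.1 hs.1)
  rw [dist_eq_norm]
  have : 0 ≤ 2 / μ * √(f (θ T)) := by positivity
  linarith

theorem exists_tendsto_of_lojasiewicz (hf₀ : ∀ x, 0 ≤ f x) (hμ : 0 < μ) {R : ℝ}
    (hR : 2 / μ * √(f (θ 0)) < R)
    (hloj : ∀ q ∈ closedBall (θ 0) R, f q ≤ f (θ 0) → μ * √(f q) ≤ ‖gradient f q‖) :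
    ∃ l, Tendsto θ atTop (𝓝 l) ∧ ∀ t ≥ 0, f (θ t) ≤ f (θ 0) * Real.exp (-μ ^ 2 * t) ∧
      ‖θ t - l‖ ≤ 2 / μ * √(f (θ 0)) * Real.exp (-(μ ^ 2 / 2) * t) := by
  have hlojθ : ∀ s ≥ 0, μ * √(f (θ s)) ≤ ‖gradient f (θ s)‖ := fun s hs =>
    hloj _ (mem_closedBall.2 ((hθ.dist_le_of_lojasiewicz hf hf₀ hμ hR hloj s hs).trans hR.le))
      (hθ.antitoneOn_comp hf self_mem_Ici hs hs)
  have hdecay : ∀ t ≥ 0, f (θ t) ≤ f (θ 0) * Real.exp (-μ ^ 2 * t) := fun t ht =>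
    hθ.comp_le_mul_exp hf hf₀ hμ.le ht fun s hs => hlojθ s hs.1
  have hsqrt : ∀ t ≥ 0, √(f (θ t)) ≤ √(f (θ 0)) * Real.exp (-(μ ^ 2 / 2) * t) := by
    intro t ht
    calc √(f (θ t)) ≤ √(f (θ 0) * Real.exp (-μ ^ 2 * t)) := Real.sqrt_le_sqrt (hdecay t ht)
      _ = √(f (θ 0)) * Real.exp (-(μ ^ 2 / 2) * t) := by
        rw [Real.sqrt_mul (hf₀ _), ← Real.exp_half]
        ring_nf
  have hφ : Tendsto (fun t => 2 / μ * √(f (θ 0)) * Real.exp (-(μ ^ 2 / 2) * t))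
      atTop (𝓝 0) := by
    have := (Real.tendsto_exp_neg_atTop_nhds_zero.comp
      (tendsto_id.const_mul_atTop (by positivity : 0 < μ ^ 2 / 2))).const_mul
      (2 / μ * √(f (θ 0)))
    simpa [Function.comp_def, neg_mul] using this
  obtain ⟨l, hl, hbound⟩ := exists_tendsto_of_norm_sub_le hφ fun s t hs hst =>
    calc ‖θ t - θ s‖ ≤ 2 / μ * (√(f (θ s)) - √(f (θ t))) :=
          hθ.norm_sub_le hf hf₀ hμ hs hst fun r hr => hlojθ r (hs.trans hr.1)
      _ ≤ 2 / μ * √(f (θ s)) := by gcongr; exact sub_le_self _ (Real.sqrt_nonneg _)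
      _ ≤ 2 / μ * (√(f (θ 0)) * Real.exp (-(μ ^ 2 / 2) * s)) := by gcongr; exact hsqrt s hs
      _ = _ := by ring
  exact ⟨l, hl, fun t ht => ⟨hdecay t ht, hbound t ht⟩⟩

end IsGradientFlow

end GradientFlow

theorem stmt9_general
    {n m p : ℕ}
    (L : EuclideanSpace ℝ (Fin m) → ℝ)
    (F : EuclideanSpace ℝ (Fin n) → EuclideanSpace ℝ (Fin m))
    (g : EuclideanSpace ℝ (Fin p) → EuclideanSpace ℝ (Fin n))
    (hL : ContDiff ℝ 1 L)
    (hLnonneg : ∀ v, 0 ≤ L v)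
    (hF : ContDiff ℝ 1 F)
    (hg : ContDiff ℝ 1 g)
    (θ θ' : ℝ → EuclideanSpace ℝ (Fin p)) (θ₀ : EuclideanSpace ℝ (Fin p))
    (hθ0 : θ 0 = θ₀)
    (hθd : ∀ t ≥ (0:ℝ), HasDerivAt θ (θ' t) t)
    (hflow : ∀ t ≥ (0:ℝ), θ' t = -gradient (fun q => L (F (g q))) (θ t))
    (c : ℝ) (hc : 0 < c)
    (r₀ : ℝ) (hr₀ : L (F (g (θ 0))) < r₀)
    (hKL : ∀ v : EuclideanSpace ℝ (Fin m), 0 < L v → L v < r₀ →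
      1 ≤ c / (2 * Real.sqrt (L v)) * ‖gradient L v‖)
    (σF : ℝ) (hσF : 0 < σF)
    (σ₀ : ℝ) (hσ₀ : σ₀ = sigmaMin (fderiv ℝ g θ₀)) (hσ₀pos : 0 < σ₀)
    (R : ℝ) (hRpos : 0 < R)
    (hinj : ∀ q ∈ Metric.closedBall θ₀ R,
      gradient L (F (g q)) ∈ LinearMap.range (fderiv ℝ F (g q) : EuclideanSpace ℝ (Fin n) →ₗ[ℝ] EuclideanSpace ℝ (Fin m)) ∧
      ∀ z ∈ LinearMap.range (fderiv ℝ F (g q) : EuclideanSpace ℝ (Fin n) →ₗ[ℝ] EuclideanSpace ℝ (Fin m)),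
        σF * ‖z‖ ≤ ‖ContinuousLinearMap.adjoint (fderiv ℝ F (g q)) z‖)
    (hLip : ∀ a ∈ Metric.closedBall θ₀ R, ∀ b ∈ Metric.closedBall θ₀ R,
      ‖fderiv ℝ g a - fderiv ℝ g b‖ ≤ σ₀ / (2 * R) * ‖a - b‖)
    (hRR : 2 / (σF * σ₀) * (c * Real.sqrt (L (F (g θ₀)))) < R) :
    ∃ θlim : EuclideanSpace ℝ (Fin p), Tendsto θ atTop (𝓝 θlim) ∧
      ∀ t ≥ (0:ℝ),
        L (F (g (θ t))) ≤ L (F (g (θ 0))) * Real.exp (-(σF ^ 2 * σ₀ ^ 2 / c ^ 2) * t) ∧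
        ‖θ t - θlim‖ ≤ 2 * c / (σ₀ * σF) * Real.sqrt (L (F (g (θ 0)))) *
          Real.exp (-(σF ^ 2 * σ₀ ^ 2 / (2 * c ^ 2)) * t) := by
  set f := fun q => L (F (g q))
  have hLd := hL.differentiable one_ne_zero
  have hFd := hF.differentiable one_ne_zero
  have hgd := hg.differentiable one_ne_zero
  have hJg : ∀ q ∈ closedBall θ₀ R, ∀ u, σ₀ / 2 * ‖u‖ ≤ ‖adjoint (fderiv ℝ g q) u‖ := by
    intro q hq u
    have hclose : ‖fderiv ℝ g θ₀ - fderiv ℝ g q‖ ≤ σ₀ / 2 :=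
      calc _ ≤ σ₀ / (2 * R) * ‖θ₀ - q‖ := hLip _ (mem_closedBall_self hRpos.le) q hq
        _ ≤ σ₀ / (2 * R) * R := by gcongr; rwa [← dist_eq_norm, dist_comm]
        _ = σ₀ / 2 := by field_simp
    simpa [← hσ₀, sub_half] using sigmaMin_sub_mul_norm_le hclose u
  have hloj : ∀ q ∈ closedBall (θ 0) R, f q ≤ f (θ 0) →
      σF * σ₀ / c * √(f q) ≤ ‖gradient f q‖ := by
    intro q hq hfq
    rw [hθ0] at hq
    exact mul_sqrt_le_norm_gradient_comp (hLd _) (hFd _) (hgd q) hc hσ₀pos.le hσF.le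
      (hLnonneg _) (fun hpos => hKL _ hpos (hfq.trans_lt hr₀)) ((hinj q hq).2 _ (hinj q hq).1)
      (hJg q hq)
  have hμ : 2 / (σF * σ₀ / c) = 2 * c / (σ₀ * σF) := by field_simp
  have hR : 2 / (σF * σ₀ / c) * √(f (θ 0)) < R := by
    rw [hμ, hθ0]; convert hRR using 1; ring
  obtain ⟨l, hl, hbound⟩ := IsGradientFlow.exists_tendsto_of_lojasiewicz (f := f)
    (fun t ht => hflow t ht ▸ hθd t ht) (fun q => (hLd _).comp q ((hFd _).comp q (hgd q)))
    (fun q => hLnonneg _) (by positivity) hR hloj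
  refine ⟨l, hl, fun t ht => ?_⟩
  convert hbound t ht using 4 <;> first | exact hμ.symm | ring

theorem stmt9
    {n m p : ℕ} (hn : 0 < n) (hm : 0 < m) (hp : 0 < p)
    (L : EuclideanSpace ℝ (Fin m) → ℝ)
    (F : EuclideanSpace ℝ (Fin n) → EuclideanSpace ℝ (Fin m))
    (g : EuclideanSpace ℝ (Fin p) → EuclideanSpace ℝ (Fin n))
    (hL : ContDiff ℝ 1 L)
    (hLnonneg : ∀ v, 0 ≤ L v) (hLmin : ∃ v, L v = 0)
    (hLgrad : ∀ s : Set (EuclideanSpace ℝ (Fin m)), Bornology.IsBounded s →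
      ∃ K : ℝ≥0, LipschitzOnWith K (fun v => gradient L v) s)
    (hF : ContDiff ℝ 1 F)
    (hJF : ∀ s : Set (EuclideanSpace ℝ (Fin n)), Bornology.IsBounded s →
      ∃ K : ℝ≥0, LipschitzOnWith K (fun x => fderiv ℝ F x) s)
    (hg : ContDiff ℝ 1 g)
    (hJg : ∀ s : Set (EuclideanSpace ℝ (Fin p)), Bornology.IsBounded s →
      ∃ K : ℝ≥0, LipschitzOnWith K (fun q => fderiv ℝ g q) s)
    (θ θ' : ℝ → EuclideanSpace ℝ (Fin p)) (θ₀ : EuclideanSpace ℝ (Fin p))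
    (hθ0 : θ 0 = θ₀)
    (hθd : ∀ t ≥ (0:ℝ), HasDerivAt θ (θ' t) t)
    (hθcont : ContinuousOn θ' (Set.Ici 0))
    (hflow : ∀ t ≥ (0:ℝ), θ' t = -gradient (fun q => L (F (g q))) (θ t))
    (c : ℝ) (hc : 0 < c)
    (r₀ : ℝ) (hr₀ : L (F (g (θ 0))) < r₀)
    (hKL : ∀ v : EuclideanSpace ℝ (Fin m), 0 < L v → L v < r₀ →
      1 ≤ c / (2 * Real.sqrt (L v)) * ‖gradient L v‖)
    (σF : ℝ) (hσF : 0 < σF)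
    (σ₀ : ℝ) (hσ₀ : σ₀ = sigmaMin (fderiv ℝ g θ₀)) (hσ₀pos : 0 < σ₀)
    (R : ℝ) (hRpos : 0 < R)
    (hinj : ∀ q ∈ Metric.closedBall θ₀ R,
      gradient L (F (g q)) ∈ LinearMap.range (fderiv ℝ F (g q) : EuclideanSpace ℝ (Fin n) →ₗ[ℝ] EuclideanSpace ℝ (Fin m)) ∧
      ∀ z ∈ LinearMap.range (fderiv ℝ F (g q) : EuclideanSpace ℝ (Fin n) →ₗ[ℝ] EuclideanSpace ℝ (Fin m)),
        σF * ‖z‖ ≤ ‖ContinuousLinearMap.adjoint (fderiv ℝ F (g q)) z‖)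
    (hLip : ∀ a ∈ Metric.closedBall θ₀ R, ∀ b ∈ Metric.closedBall θ₀ R,
      ‖fderiv ℝ g a - fderiv ℝ g b‖ ≤ σ₀ / (2 * R) * ‖a - b‖)
    (hRR : 2 / (σF * σ₀) * (c * Real.sqrt (L (F (g θ₀)))) < R)
    (hL0pos : 0 < L (F (g (θ 0)))) :
    ∃ θlim : EuclideanSpace ℝ (Fin p), Tendsto θ atTop (𝓝 θlim) ∧
      ∀ t ≥ (0:ℝ),
        L (F (g (θ t))) ≤ L (F (g (θ 0))) * Real.exp (-(σF ^ 2 * σ₀ ^ 2 / c ^ 2) * t) ∧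
        ‖θ t - θlim‖ ≤ 2 * c / (σ₀ * σF) * Real.sqrt (L (F (g (θ 0)))) *
          Real.exp (-(σF ^ 2 * σ₀ ^ 2 / (2 * c ^ 2)) * t) :=
  stmt9_general L F g hL hLnonneg hF hg θ θ' θ₀ hθ0 hθd hflow c hc r₀ hr₀ hKL σF hσF σ₀ hσ₀ hσ₀pos R
    hRpos hinj hLip hRR
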